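/- arXiv:1808.06854 — 7 statements merged into one kernel-verified Lean document; each statement's English description precedes it below -/
import Mathlib

section
/- Let u, v, r : ℝ × ℝ × ℝ → ℝ, written as functions of (x,y,t), with u twice continuously differentiable and v, r continuously differentiable, and suppose that at every point: ∂ₜu = v, ∂ₜv = ∂ₓₓu + ∂ᵧᵧu − b(u)·r, and ∂ₜr = (1/2)·b(u)·v. Then at every point the modified local energy conservation law holds: ∂ₜ( (1/2)v² + (1/2)(∂ₓu)² + (1/2)(∂ᵧu)² + r² ) − ∂ₓ( (∂ₓu)·v ) − ∂ᵧ( (∂ᵧu)·v ) = 0. -/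
/-!
Differentiating the energy density in `t` and substituting the equations, the source terms
`∓ b(u) r v` coming from `½ v²` and `r²` cancel. What remains is
`v (∂ₓₓu + ∂ᵧᵧu) + ∂ₓu ∂ₜ∂ₓu + ∂ᵧu ∂ₜ∂ᵧu`, which is the divergence of the flux `(∂ₓu v, ∂ᵧu v)`
once `∂ₜ∂ₓu = ∂ₓ∂ₜu = ∂ₓv` (and likewise in `y`) by the symmetry of second derivatives of the
`C²` function `u`; the slice derivatives are identified with Fréchet derivatives for this.
-/

open Real

/-- Partial derivative in the first coordinate `x`. -/
noncomputable def px (u : ℝ × ℝ × ℝ → ℝ) : ℝ × ℝ × ℝ → ℝ :=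
  fun p => deriv (fun s => u (s, p.2.1, p.2.2)) p.1

/-- Partial derivative in the second coordinate `y`. -/
noncomputable def py (u : ℝ × ℝ × ℝ → ℝ) : ℝ × ℝ × ℝ → ℝ :=
  fun p => deriv (fun s => u (p.1, s, p.2.2)) p.2.1

/-- Partial derivative in the third coordinate `t`. -/
noncomputable def pt (u : ℝ × ℝ × ℝ → ℝ) : ℝ × ℝ × ℝ → ℝ :=
  fun p => deriv (fun s => u (p.1, p.2.1, s)) p.2.2

/-- The function `b(x) = sin x / √(2 - cos x)`. -/
noncomputable def b (x : ℝ) : ℝ := Real.sin x / Real.sqrt (2 - Real.cos x)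

section Partials

variable {f g : ℝ × ℝ × ℝ → ℝ} {p : ℝ × ℝ × ℝ}

lemma hasDerivAt_fderiv_apply_x (hf : DifferentiableAt ℝ f p) :
    HasDerivAt (fun s => f (s, p.2.1, p.2.2)) (fderiv ℝ f p (1, 0, 0)) p.1 :=
  hf.hasFDerivAt.comp_hasDerivAt _
    ((hasDerivAt_id _).prodMk ((hasDerivAt_const _ _).prodMk (hasDerivAt_const _ _)))

lemma hasDerivAt_fderiv_apply_y (hf : DifferentiableAt ℝ f p) :
    HasDerivAt (fun s => f (p.1, s, p.2.2)) (fderiv ℝ f p (0, 1, 0)) p.2.1 :=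
  hf.hasFDerivAt.comp_hasDerivAt _
    ((hasDerivAt_const _ _).prodMk ((hasDerivAt_id _).prodMk (hasDerivAt_const _ _)))

lemma hasDerivAt_fderiv_apply_t (hf : DifferentiableAt ℝ f p) :
    HasDerivAt (fun s => f (p.1, p.2.1, s)) (fderiv ℝ f p (0, 0, 1)) p.2.2 :=
  hf.hasFDerivAt.comp_hasDerivAt _
    ((hasDerivAt_const _ _).prodMk ((hasDerivAt_const _ _).prodMk (hasDerivAt_id _)))

lemma px_apply_eq_fderiv (hf : DifferentiableAt ℝ f p) : px f p = fderiv ℝ f p (1, 0, 0) :=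
  (hasDerivAt_fderiv_apply_x hf).deriv

lemma py_apply_eq_fderiv (hf : DifferentiableAt ℝ f p) : py f p = fderiv ℝ f p (0, 1, 0) :=
  (hasDerivAt_fderiv_apply_y hf).deriv

lemma pt_apply_eq_fderiv (hf : DifferentiableAt ℝ f p) : pt f p = fderiv ℝ f p (0, 0, 1) :=
  (hasDerivAt_fderiv_apply_t hf).deriv

lemma hasDerivAt_px (hf : DifferentiableAt ℝ f p) :
    HasDerivAt (fun s => f (s, p.2.1, p.2.2)) (px f p) p.1 := by
  rw [px_apply_eq_fderiv hf]
  exact hasDerivAt_fderiv_apply_x hf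

lemma hasDerivAt_py (hf : DifferentiableAt ℝ f p) :
    HasDerivAt (fun s => f (p.1, s, p.2.2)) (py f p) p.2.1 := by
  rw [py_apply_eq_fderiv hf]
  exact hasDerivAt_fderiv_apply_y hf

lemma hasDerivAt_pt (hf : DifferentiableAt ℝ f p) :
    HasDerivAt (fun s => f (p.1, p.2.1, s)) (pt f p) p.2.2 := by
  rw [pt_apply_eq_fderiv hf]
  exact hasDerivAt_fderiv_apply_t hf

lemma px_mul (hf : DifferentiableAt ℝ f p) (hg : DifferentiableAt ℝ g p) :
    px (fun q => f q * g q) p = px f p * g p + f p * px g p :=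
  ((hasDerivAt_px hf).mul (hasDerivAt_px hg)).deriv

lemma py_mul (hf : DifferentiableAt ℝ f p) (hg : DifferentiableAt ℝ g p) :
    py (fun q => f q * g q) p = py f p * g p + f p * py g p :=
  ((hasDerivAt_py hf).mul (hasDerivAt_py hg)).deriv

end Partials

section Smooth

variable {f : ℝ × ℝ × ℝ → ℝ}

lemma px_eq_fderiv (hf : Differentiable ℝ f) : px f = fun q => fderiv ℝ f q (1, 0, 0) :=
  funext fun q => px_apply_eq_fderiv (hf q)

lemma py_eq_fderiv (hf : Differentiable ℝ f) : py f = fun q => fderiv ℝ f q (0, 1, 0) :=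
  funext fun q => py_apply_eq_fderiv (hf q)

lemma pt_eq_fderiv (hf : Differentiable ℝ f) : pt f = fun q => fderiv ℝ f q (0, 0, 1) :=
  funext fun q => pt_apply_eq_fderiv (hf q)

variable {n : WithTop ℕ∞}

lemma contDiff_fderiv_apply (hf : ContDiff ℝ (n + 1) f) (w : ℝ × ℝ × ℝ) :
    ContDiff ℝ n (fun q => fderiv ℝ f q w) :=
  (hf.fderiv_right le_rfl).clm_apply contDiff_const

lemma contDiff_px (hf : ContDiff ℝ (n + 1) f) : ContDiff ℝ n (px f) :=
  px_eq_fderiv (hf.differentiable (by simp)) ▸ contDiff_fderiv_apply hf _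

lemma contDiff_py (hf : ContDiff ℝ (n + 1) f) : ContDiff ℝ n (py f) :=
  py_eq_fderiv (hf.differentiable (by simp)) ▸ contDiff_fderiv_apply hf _

lemma contDiff_pt (hf : ContDiff ℝ (n + 1) f) : ContDiff ℝ n (pt f) :=
  pt_eq_fderiv (hf.differentiable (by simp)) ▸ contDiff_fderiv_apply hf _

lemma fderiv_fderiv_apply_comm (hf : ContDiff ℝ 2 f) (p v w : ℝ × ℝ × ℝ) :
    fderiv ℝ (fun q => fderiv ℝ f q v) p w = fderiv ℝ (fun q => fderiv ℝ f q w) p v := by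
  have hf' : DifferentiableAt ℝ (fderiv ℝ f) p :=
    (hf.fderiv_right (m := 1) le_rfl).differentiable one_ne_zero p
  simp only [fderiv_clm_apply hf' (differentiableAt_const _), fderiv_const_apply]
  simpa using hf.contDiffAt.isSymmSndFDerivAt (by simp) w v

lemma pt_px_eq_px_pt (hf : ContDiff ℝ 2 f) : pt (px f) = px (pt f) := by
  funext q
  have hdiff : Differentiable ℝ f := hf.differentiable (by simp)
  rw [pt_apply_eq_fderiv ((contDiff_px (n := 1) hf).differentiable one_ne_zero q),
    px_apply_eq_fderiv ((contDiff_pt (n := 1) hf).differentiable one_ne_zero q),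
    px_eq_fderiv hdiff, pt_eq_fderiv hdiff]
  exact fderiv_fderiv_apply_comm hf q _ _

lemma pt_py_eq_py_pt (hf : ContDiff ℝ 2 f) : pt (py f) = py (pt f) := by
  funext q
  have hdiff : Differentiable ℝ f := hf.differentiable (by simp)
  rw [pt_apply_eq_fderiv ((contDiff_py (n := 1) hf).differentiable one_ne_zero q),
    py_apply_eq_fderiv ((contDiff_pt (n := 1) hf).differentiable one_ne_zero q),
    py_eq_fderiv hdiff, pt_eq_fderiv hdiff]
  exact fderiv_fderiv_apply_comm hf q _ _

end Smooth

theorem IEQ_system_modified_local_energy_conservation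
    (u v r : ℝ × ℝ × ℝ → ℝ)
    (hu : ContDiff ℝ 2 u) (hv : ContDiff ℝ 1 v) (hr : ContDiff ℝ 1 r)
    (h1 : ∀ p : ℝ × ℝ × ℝ, pt u p = v p)
    (h2 : ∀ p : ℝ × ℝ × ℝ,
      pt v p = px (px u) p + py (py u) p - b (u p) * r p)
    (h3 : ∀ p : ℝ × ℝ × ℝ, pt r p = (1/2) * b (u p) * v p) :
    ∀ p : ℝ × ℝ × ℝ,
      pt (fun q => (1/2) * (v q)^2 + (1/2) * (px u q)^2 + (1/2) * (py u q)^2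
            + (r q)^2) p
        - px (fun q => px u q * v q) p
        - py (fun q => py u q * v q) p = 0 := by
  intro p
  have hv' := hv.differentiable one_ne_zero p
  have hr' := hr.differentiable one_ne_zero p
  have hpxu := (contDiff_px (n := 1) hu).differentiable one_ne_zero p
  have hpyu := (contDiff_py (n := 1) hu).differentiable one_ne_zero p
  have energy_rate : pt (fun q => (1/2) * (v q)^2 + (1/2) * (px u q)^2 + (1/2) * (py u q)^2
      + (r q)^2) p
      = v p * pt v p + px u p * pt (px u) p + py u p * pt (py u) p + 2 * r p * pt r p :=
    ((((((hasDerivAt_pt hv').pow 2).const_mul (1/2 : ℝ)).add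
      (((hasDerivAt_pt hpxu).pow 2).const_mul (1/2 : ℝ))).add
      (((hasDerivAt_pt hpyu).pow 2).const_mul (1/2 : ℝ))).add
      ((hasDerivAt_pt hr').pow 2)).deriv.trans (by ring)
  rw [energy_rate, px_mul hpxu hv', py_mul hpyu hv', pt_px_eq_px_pt hu, pt_py_eq_py_pt hu,
    funext h1, h2, h3]
  ring
end

section
/- Let h₁, h₂ > 0 and let U, V, R : ℝ → (ℤ × ℤ → ℝ) be time-dependent grid functions such that for each (j₁,j₂) the maps t ↦ U(t)(j₁,j₂), t ↦ V(t)(j₁,j₂), t ↦ R(t)(j₁,j₂) are differentiable, and suppose that for all t ∈ ℝ and all (j₁,j₂) ∈ ℤ²: (d/dt)U(t)(j₁,j₂) = V(t)(j₁,j₂); (d/dt)V(t)(j₁,j₂) = (δ_x²U(t))(j₁,j₂) + (δ_y²U(t))(j₁,j₂) − b(U(t)(j₁,j₂))·R(t)(j₁,j₂); (d/dt)R(t)(j₁,j₂) = (1/2)·b(U(t)(j₁,j₂))·V(t)(j₁,j₂). Then for all t and all (j₁,j₂): (d/dt)[ (1/2)V(t)(j₁,j₂)² + (1/2)((δ_xU(t))(j₁,j₂))²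 + (1/2)((δ_yU(t))(j₁,j₂))² + R(t)(j₁,j₂)² ] = (δ_xF(t))(j₁,j₂) + (δ_yG(t))(j₁,j₂), where F(t)(j₁,j₂) = (δ_xU(t))(j₁−1,j₂)·V(t)(j₁,j₂) and G(t)(j₁,j₂) = (δ_yU(t))(j₁,j₂−1)·V(t)(j₁,j₂). -/
/-- Forward difference in the first index, with mesh size `h₁`. -/
noncomputable def dx (h₁ : ℝ) (W : ℤ × ℤ → ℝ) : ℤ × ℤ → ℝ :=
  fun j => (W (j.1 + 1, j.2) - W (j.1, j.2)) / h₁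

/-- Forward difference in the second index, with mesh size `h₂`. -/
noncomputable def dy (h₂ : ℝ) (W : ℤ × ℤ → ℝ) : ℤ × ℤ → ℝ :=
  fun j => (W (j.1, j.2 + 1) - W (j.1, j.2)) / h₂

/-- Second central difference in the first index, with mesh size `h₁`. -/
noncomputable def dxx (h₁ : ℝ) (W : ℤ × ℤ → ℝ) : ℤ × ℤ → ℝ :=
  fun j => (W (j.1 + 1, j.2) - 2 * W (j.1, j.2) + W (j.1 - 1, j.2)) / h₁ ^ 2

/-- Second central difference in the second index, with mesh size `h₂`. -/
noncomputable def dyy (h₂ : ℝ) (W : ℤ × ℤ → ℝ) : ℤ × ℤ → ℝ :=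
  fun j => (W (j.1, j.2 + 1) - 2 * W (j.1, j.2) + W (j.1, j.2 - 1)) / h₂ ^ 2

theorem semi_discrete_local_energy_conservation
    (h₁ h₂ : ℝ) (hh₁ : 0 < h₁) (hh₂ : 0 < h₂)
    (U V R : ℝ → ℤ × ℤ → ℝ)
    (hUdiff : ∀ j : ℤ × ℤ, Differentiable ℝ (fun t => U t j))
    (hVdiff : ∀ j : ℤ × ℤ, Differentiable ℝ (fun t => V t j))
    (hRdiff : ∀ j : ℤ × ℤ, Differentiable ℝ (fun t => R t j))
    (h1 : ∀ (t : ℝ) (j : ℤ × ℤ), deriv (fun s => U s j) t = V t j)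
    (h2 : ∀ (t : ℝ) (j : ℤ × ℤ), deriv (fun s => V s j) t =
      dxx h₁ (U t) j + dyy h₂ (U t) j - b (U t j) * R t j)
    (h3 : ∀ (t : ℝ) (j : ℤ × ℤ), deriv (fun s => R s j) t =
      (1/2) * b (U t j) * V t j)
    (F G : ℝ → ℤ × ℤ → ℝ)
    (hF : ∀ (t : ℝ) (j : ℤ × ℤ), F t j = dx h₁ (U t) (j.1 - 1, j.2) * V t j)
    (hG : ∀ (t : ℝ) (j : ℤ × ℤ), G t j = dy h₂ (U t) (j.1, j.2 - 1) * V t j) :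
    ∀ (t : ℝ) (j : ℤ × ℤ),
      deriv (fun s => (1/2) * (V s j)^2 + (1/2) * (dx h₁ (U s) j)^2
        + (1/2) * (dy h₂ (U s) j)^2 + (R s j)^2) t
      = dx h₁ (F t) j + dy h₂ (G t) j := by
  intro t j
  obtain ⟨j₁, j₂⟩ := j
  have hU : ∀ k : ℤ × ℤ, HasDerivAt (fun s => U s k) (V t k) t := fun k => by
    have := ((hUdiff k) t).hasDerivAt
    rwa [h1] at this
  have hV : ∀ k : ℤ × ℤ, HasDerivAt (fun s => V s k)
      (dxx h₁ (U t) k + dyy h₂ (U t) k - b (U t k) * R t k) t := fun k => by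
    have := ((hVdiff k) t).hasDerivAt
    rwa [h2] at this
  have hR : ∀ k : ℤ × ℤ, HasDerivAt (fun s => R s k)
      ((1/2) * b (U t k) * V t k) t := fun k => by
    have := ((hRdiff k) t).hasDerivAt
    rwa [h3] at this
  have hE : HasDerivAt (fun s => (1/2) * (V s (j₁, j₂))^2
      + (1/2) * (((U s (j₁ + 1, j₂)) - U s (j₁, j₂)) / h₁)^2
      + (1/2) * (((U s (j₁, j₂ + 1)) - U s (j₁, j₂)) / h₂)^2 + (R s (j₁, j₂))^2)
      ((1/2) * ((2 : ℕ) * (V t (j₁, j₂)) ^ 1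
          * (dxx h₁ (U t) (j₁, j₂) + dyy h₂ (U t) (j₁, j₂)
            - b (U t (j₁, j₂)) * R t (j₁, j₂)))
        + (1/2) * ((2 : ℕ) * (((U t (j₁ + 1, j₂)) - U t (j₁, j₂)) / h₁) ^ 1
          * ((V t (j₁ + 1, j₂) - V t (j₁, j₂)) / h₁))
        + (1/2) * ((2 : ℕ) * (((U t (j₁, j₂ + 1)) - U t (j₁, j₂)) / h₂) ^ 1
          * ((V t (j₁, j₂ + 1) - V t (j₁, j₂)) / h₂))
        + (2 : ℕ) * (R t (j₁, j₂)) ^ 1 * ((1/2) * b (U t (j₁, j₂)) * V t (j₁, j₂))) t := by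
    exact ((((hV (j₁, j₂)).pow 2).const_mul (1/2 : ℝ)).add
        (((((hU (j₁ + 1, j₂)).sub (hU (j₁, j₂))).div_const h₁).pow 2).const_mul (1/2 : ℝ))).add
        (((((hU (j₁, j₂ + 1)).sub (hU (j₁, j₂))).div_const h₂).pow 2).const_mul (1/2 : ℝ)) |>.add
        ((hR (j₁, j₂)).pow 2)
  have hgoal : (fun s => (1/2) * (V s (j₁, j₂))^2 + (1/2) * (dx h₁ (U s) (j₁, j₂))^2
        + (1/2) * (dy h₂ (U s) (j₁, j₂))^2 + (R s (j₁, j₂))^2)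
      = (fun s => (1/2) * (V s (j₁, j₂))^2
      + (1/2) * (((U s (j₁ + 1, j₂)) - U s (j₁, j₂)) / h₁)^2
      + (1/2) * (((U s (j₁, j₂ + 1)) - U s (j₁, j₂)) / h₂)^2 + (R s (j₁, j₂))^2) := by
    funext s; simp [dx, dy]
  rw [hgoal, hE.deriv]
  simp only [dx, dy, dxx, dyy, hF, hG]
  have h1' : h₁ ≠ 0 := ne_of_gt hh₁
  have h2' : h₂ ≠ 0 := ne_of_gt hh₂
  push_cast
  field_simp
  ring
end

section
/- Let N₁, N₂ be positive integers and h₁, h₂ > 0, and let U, V, R : ℝ → (ℤ × ℤ → ℝ) be time-dependent grid functions, (N₁,N₂)-periodic for every t, such that for each (j₁,j₂) the maps t ↦ U(t)(j₁,j₂), t ↦ V(t)(j₁,j₂), t ↦ R(t)(j₁,j₂) are differentiable, and suppose that for all t and (j₁,j₂): (d/dt)U(t)(j₁,j₂) = V(t)(j₁,j₂); (d/dt)V(t)(j₁,j₂) = (δ_x²U(t))(j₁,j₂) + (δ_y²U(t))(j₁,j₂) − b(U(t)(j₁,j₂))·R(t)(j₁,j₂); (d/dt)R(t)(j₁,j₂)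 = (1/2)·b(U(t)(j₁,j₂))·V(t)(j₁,j₂). Then the semi-discrete modified global energy 𝓔(t) = h₁h₂ Σ_{j₁=0}^{N₁−1} Σ_{j₂=0}^{N₂−1} [ (1/2)V(t)(j₁,j₂)² + (1/2)((δ_xU(t))(j₁,j₂))² + (1/2)((δ_yU(t))(j₁,j₂))² + R(t)(j₁,j₂)² ] is constant in t. -/
/-- An `(N₁,N₂)`-periodic grid function. -/
def GridPeriodic (N₁ N₂ : ℕ) (W : ℤ × ℤ → ℝ) : Prop :=
  ∀ j₁ j₂ : ℤ, W (j₁ + N₁, j₂) = W (j₁, j₂) ∧ W (j₁, j₂ + N₂) = W (j₁, j₂)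

open Finset

theorem Function.Periodic.sum_range_sub_eq_zero {M : Type*} [AddCommGroup M] {g : ℤ → M}
    {N : ℕ} (hg : Function.Periodic g N) :
    ∑ j ∈ range N, (g (j + 1) - g j) = 0 := by
  have htel := sum_range_sub (fun n : ℕ => g n) N
  push_cast at htel
  rw [htel, ← zero_add (N : ℤ), hg, sub_self]

/-- The summand is `g (j + 1) - g j` for `g k = (u k - u (k - 1)) * v k / h ^ 2`. -/
theorem sum_mul_secondDiff_add_diff_mul_diff_eq_zero {𝕜 : Type*} [Field 𝕜] {N : ℕ}
    {u v : ℤ → 𝕜} (hu : Function.Periodic u N) (hv : Function.Periodic v N) (h : 𝕜) :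
    ∑ j ∈ range N, (v j * ((u (j + 1) - 2 * u j + u (j - 1)) / h ^ 2)
      + (u (j + 1) - u j) / h * ((v (j + 1) - v j) / h)) = 0 := by
  set g : ℤ → 𝕜 := fun k => (u k - u (k - 1)) * v k / h ^ 2
  have hg : Function.Periodic g N := fun k => by
    simp only [g, hu k, hv k, add_sub_right_comm k, hu (k - 1)]
  rw [← hg.sum_range_sub_eq_zero]
  refine sum_congr rfl fun j _ => ?_
  simp only [g, add_sub_cancel_right]
  ring

section Grid

variable {N₁ N₂ : ℕ} {h₁ h₂ : ℝ} {W Z : ℤ × ℤ → ℝ}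

theorem GridPeriodic.sum_mul_dxx_add_dx_mul_dx_eq_zero (hW : GridPeriodic N₁ N₂ W)
    (hZ : GridPeriodic N₁ N₂ Z) (j₂ : ℤ) :
    ∑ j₁ ∈ range N₁, (Z (j₁, j₂) * dxx h₁ W (j₁, j₂)
      + dx h₁ W (j₁, j₂) * dx h₁ Z (j₁, j₂)) = 0 :=
  sum_mul_secondDiff_add_diff_mul_diff_eq_zero (u := fun k => W (k, j₂)) (v := fun k => Z (k, j₂))
    (fun k => (hW k j₂).1) (fun k => (hZ k j₂).1) h₁

theorem GridPeriodic.sum_mul_dyy_add_dy_mul_dy_eq_zero (hW : GridPeriodic N₁ N₂ W)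
    (hZ : GridPeriodic N₁ N₂ Z) (j₁ : ℤ) :
    ∑ j₂ ∈ range N₂, (Z (j₁, j₂) * dyy h₂ W (j₁, j₂)
      + dy h₂ W (j₁, j₂) * dy h₂ Z (j₁, j₂)) = 0 :=
  sum_mul_secondDiff_add_diff_mul_diff_eq_zero (u := fun k => W (j₁, k)) (v := fun k => Z (j₁, k))
    (fun k => (hW j₁ k).2) (fun k => (hZ j₁ k).2) h₂

theorem GridPeriodic.sum_sum_mul_laplacian_add_grad_mul_grad_eq_zero
    (hW : GridPeriodic N₁ N₂ W) (hZ : GridPeriodic N₁ N₂ Z) :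
    ∑ j₁ ∈ range N₁, ∑ j₂ ∈ range N₂, (Z (j₁, j₂) * (dxx h₁ W (j₁, j₂) + dyy h₂ W (j₁, j₂))
      + dx h₁ W (j₁, j₂) * dx h₁ Z (j₁, j₂) + dy h₂ W (j₁, j₂) * dy h₂ Z (j₁, j₂)) = 0 := by
  have hx : ∑ j₁ ∈ range N₁, ∑ j₂ ∈ range N₂,
      (Z (j₁, j₂) * dxx h₁ W (j₁, j₂) + dx h₁ W (j₁, j₂) * dx h₁ Z (j₁, j₂)) = 0 := by
    rw [sum_comm]
    exact sum_eq_zero fun j₂ _ => hW.sum_mul_dxx_add_dx_mul_dx_eq_zero hZ j₂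
  have hy : ∑ j₁ ∈ range N₁, ∑ j₂ ∈ range N₂,
      (Z (j₁, j₂) * dyy h₂ W (j₁, j₂) + dy h₂ W (j₁, j₂) * dy h₂ Z (j₁, j₂)) = 0 :=
    sum_eq_zero fun j₁ _ => hW.sum_mul_dyy_add_dy_mul_dy_eq_zero hZ j₁
  have hxy := congrArg₂ (· + ·) hx hy
  simp only [← sum_add_distrib, add_zero] at hxy
  rw [← hxy]
  exact sum_congr rfl fun _ _ => sum_congr rfl fun _ _ => by ring

end Grid

noncomputable def energyDensity (h₁ h₂ : ℝ) (U V R : ℤ × ℤ → ℝ) (j : ℤ × ℤ) : ℝ :=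
  (1/2) * (V j)^2 + (1/2) * (dx h₁ U j)^2 + (1/2) * (dy h₂ U j)^2 + (R j)^2

noncomputable def gridEnergy (N₁ N₂ : ℕ) (h₁ h₂ : ℝ) (U V R : ℤ × ℤ → ℝ) : ℝ :=
  h₁ * h₂ * ∑ j₁ ∈ range N₁, ∑ j₂ ∈ range N₂, energyDensity h₁ h₂ U V R ((j₁ : ℤ), (j₂ : ℤ))

section Derivatives

variable {U V R : ℝ → ℤ × ℤ → ℝ} {U' V' R' : ℤ × ℤ → ℝ} {t : ℝ}

theorem hasDerivAt_dx (h₁ : ℝ) (hU : ∀ j, HasDerivAt (fun s => U s j) (U' j) t) (j : ℤ × ℤ) :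
    HasDerivAt (fun s => dx h₁ (U s) j) (dx h₁ U' j) t :=
  ((hU _).sub (hU _)).div_const h₁

theorem hasDerivAt_dy (h₂ : ℝ) (hU : ∀ j, HasDerivAt (fun s => U s j) (U' j) t) (j : ℤ × ℤ) :
    HasDerivAt (fun s => dy h₂ (U s) j) (dy h₂ U' j) t :=
  ((hU _).sub (hU _)).div_const h₂

theorem hasDerivAt_energyDensity (h₁ h₂ : ℝ) (hU : ∀ j, HasDerivAt (fun s => U s j) (U' j) t)
    (hV : ∀ j, HasDerivAt (fun s => V s j) (V' j) t)
    (hR : ∀ j, HasDerivAt (fun s => R s j) (R' j) t) (j : ℤ × ℤ) :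
    HasDerivAt (fun s => energyDensity h₁ h₂ (U s) (V s) (R s) j)
      (V t j * V' j + dx h₁ (U t) j * dx h₁ U' j + dy h₂ (U t) j * dy h₂ U' j
        + 2 * R t j * R' j) t := by
  have hsum := (((((hV j).fun_pow 2).const_mul (1/2 : ℝ)).fun_add
    (((hasDerivAt_dx h₁ hU j).fun_pow 2).const_mul (1/2 : ℝ))).fun_add
    (((hasDerivAt_dy h₂ hU j).fun_pow 2).const_mul (1/2 : ℝ))).fun_add ((hR j).fun_pow 2)
  refine hsum.congr_deriv ?_
  simp only [Nat.cast_ofNat, Nat.add_one_sub_one, pow_one]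
  ring

theorem hasDerivAt_gridEnergy (N₁ N₂ : ℕ) (h₁ h₂ : ℝ)
    (hU : ∀ j, HasDerivAt (fun s => U s j) (U' j) t)
    (hV : ∀ j, HasDerivAt (fun s => V s j) (V' j) t)
    (hR : ∀ j, HasDerivAt (fun s => R s j) (R' j) t) :
    HasDerivAt (fun s => gridEnergy N₁ N₂ h₁ h₂ (U s) (V s) (R s))
      (h₁ * h₂ * ∑ j₁ ∈ range N₁, ∑ j₂ ∈ range N₂,
        (V t (j₁, j₂) * V' (j₁, j₂) + dx h₁ (U t) (j₁, j₂) * dx h₁ U' (j₁, j₂)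
          + dy h₂ (U t) (j₁, j₂) * dy h₂ U' (j₁, j₂) + 2 * R t (j₁, j₂) * R' (j₁, j₂))) t :=
  (HasDerivAt.fun_sum fun _ _ => HasDerivAt.fun_sum fun _ _ =>
    hasDerivAt_energyDensity h₁ h₂ hU hV hR _).const_mul (h₁ * h₂)

end Derivatives

theorem semi_discrete_global_energy_conservation_general
    (N₁ N₂ : ℕ)
    (h₁ h₂ : ℝ)
    (U V R : ℝ → ℤ × ℤ → ℝ)
    (hUper : ∀ t : ℝ, GridPeriodic N₁ N₂ (U t))
    (hVper : ∀ t : ℝ, GridPeriodic N₁ N₂ (V t))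
    (hUdiff : ∀ j : ℤ × ℤ, Differentiable ℝ (fun t => U t j))
    (hVdiff : ∀ j : ℤ × ℤ, Differentiable ℝ (fun t => V t j))
    (hRdiff : ∀ j : ℤ × ℤ, Differentiable ℝ (fun t => R t j))
    (h1 : ∀ (t : ℝ) (j : ℤ × ℤ), deriv (fun s => U s j) t = V t j)
    (h2 : ∀ (t : ℝ) (j : ℤ × ℤ), deriv (fun s => V s j) t =
      dxx h₁ (U t) j + dyy h₂ (U t) j - b (U t j) * R t j)
    (h3 : ∀ (t : ℝ) (j : ℤ × ℤ), deriv (fun s => R s j) t =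
      (1/2) * b (U t j) * V t j)
    (E : ℝ → ℝ)
    (hE : ∀ t : ℝ, E t = h₁ * h₂ *
      ∑ j₁ ∈ Finset.range N₁, ∑ j₂ ∈ Finset.range N₂,
        ((1/2) * (V t ((j₁ : ℤ), (j₂ : ℤ)))^2
          + (1/2) * (dx h₁ (U t) ((j₁ : ℤ), (j₂ : ℤ)))^2
          + (1/2) * (dy h₂ (U t) ((j₁ : ℤ), (j₂ : ℤ)))^2
          + (R t ((j₁ : ℤ), (j₂ : ℤ)))^2)) :
    ∀ t : ℝ, E t = E 0 := by
  have hE' : E = fun s => gridEnergy N₁ N₂ h₁ h₂ (U s) (V s) (R s) := funext hE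
  have hE_deriv : ∀ t, HasDerivAt E 0 t := fun t => by
    have hderiv := hasDerivAt_gridEnergy N₁ N₂ h₁ h₂
      (fun j => h1 t j ▸ (hUdiff j t).hasDerivAt) (fun j => h2 t j ▸ (hVdiff j t).hasDerivAt)
      (fun j => h3 t j ▸ (hRdiff j t).hasDerivAt)
    rw [hE']
    convert hderiv using 1
    rw [← mul_zero (h₁ * h₂),
      ← (hUper t).sum_sum_mul_laplacian_add_grad_mul_grad_eq_zero (h₁ := h₁) (h₂ := h₂) (hVper t)]
    congr 1
    refine sum_congr rfl fun _ _ => sum_congr rfl fun _ _ => ?_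
    ring
  exact fun t => is_const_of_deriv_eq_zero (fun x => (hE_deriv x).differentiableAt)
    (fun x => (hE_deriv x).deriv) t 0

theorem semi_discrete_global_energy_conservation
    (N₁ N₂ : ℕ) (hN₁ : 0 < N₁) (hN₂ : 0 < N₂)
    (h₁ h₂ : ℝ) (hh₁ : 0 < h₁) (hh₂ : 0 < h₂)
    (U V R : ℝ → ℤ × ℤ → ℝ)
    (hUper : ∀ t : ℝ, GridPeriodic N₁ N₂ (U t))
    (hVper : ∀ t : ℝ, GridPeriodic N₁ N₂ (V t))
    (hRper : ∀ t : ℝ, GridPeriodic N₁ N₂ (R t))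
    (hUdiff : ∀ j : ℤ × ℤ, Differentiable ℝ (fun t => U t j))
    (hVdiff : ∀ j : ℤ × ℤ, Differentiable ℝ (fun t => V t j))
    (hRdiff : ∀ j : ℤ × ℤ, Differentiable ℝ (fun t => R t j))
    (h1 : ∀ (t : ℝ) (j : ℤ × ℤ), deriv (fun s => U s j) t = V t j)
    (h2 : ∀ (t : ℝ) (j : ℤ × ℤ), deriv (fun s => V s j) t =
      dxx h₁ (U t) j + dyy h₂ (U t) j - b (U t j) * R t j)
    (h3 : ∀ (t : ℝ) (j : ℤ × ℤ), deriv (fun s => R s j) t =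
      (1/2) * b (U t j) * V t j)
    (E : ℝ → ℝ)
    (hE : ∀ t : ℝ, E t = h₁ * h₂ *
      ∑ j₁ ∈ Finset.range N₁, ∑ j₂ ∈ Finset.range N₂,
        ((1/2) * (V t ((j₁ : ℤ), (j₂ : ℤ)))^2
          + (1/2) * (dx h₁ (U t) ((j₁ : ℤ), (j₂ : ℤ)))^2
          + (1/2) * (dy h₂ (U t) ((j₁ : ℤ), (j₂ : ℤ)))^2
          + (R t ((j₁ : ℤ), (j₂ : ℤ)))^2)) :
    ∀ t : ℝ, E t = E 0 :=
  semi_discrete_global_energy_conservation_general N₁ N₂ h₁ h₂ U V R hUper hVper hUdiff hVdiff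
    hRdiff h1 h2 h3 E hE
end

section
/- Let τ, h₁, h₂ > 0 and let Uⁿ, Vⁿ, Rⁿ : ℤ × ℤ → ℝ (n ∈ ℕ) be sequences of grid functions. Fix n ≥ 1 and suppose that for all (j₁,j₂) ∈ ℤ² the LI-LEP scheme equations hold: (Uⁿ⁺¹(j₁,j₂) − Uⁿ(j₁,j₂))/τ = (Vⁿ⁺¹(j₁,j₂) + Vⁿ(j₁,j₂))/2; (Vⁿ⁺¹(j₁,j₂) − Vⁿ(j₁,j₂))/τ = (δ_x²((Uⁿ⁺¹+Uⁿ)/2))(j₁,j₂) + (δ_y²((Uⁿ⁺¹+Uⁿ)/2))(j₁,j₂) − b((3Uⁿ(j₁,j₂) − Uⁿ⁻¹(j₁,j₂))/2)·(Rⁿ⁺¹(j₁,j₂) + Rⁿ(j₁,j₂))/2; (Rⁿ⁺¹(j₁,j₂) − Rⁿ(j₁,j₂))/τ = (1/2)·b((3Uⁿ(j₁,j₂) − Uⁿ⁻¹(j₁,j₂))/2)·(Vⁿ⁺¹(j₁,j₂) + Vⁿ(j₁,j₂))/2. Define the discrete energy density Dⁿ(j₁,j₂) = (1/2)Vⁿ(j₁,j₂)²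 + (1/2)((δ_xUⁿ)(j₁,j₂))² + (1/2)((δ_yUⁿ)(j₁,j₂))² + Rⁿ(j₁,j₂)², and the fluxes Fⁿ(j₁,j₂) = ((δ_x((Uⁿ⁺¹+Uⁿ)/2))(j₁−1,j₂))·((Vⁿ⁺¹(j₁,j₂)+Vⁿ(j₁,j₂))/2) and Gⁿ(j₁,j₂) = ((δ_y((Uⁿ⁺¹+Uⁿ)/2))(j₁,j₂−1))·((Vⁿ⁺¹(j₁,j₂)+Vⁿ(j₁,j₂))/2). Then for all (j₁,j₂) ∈ ℤ²: (Dⁿ⁺¹(j₁,j₂) − Dⁿ(j₁,j₂))/τ − (δ_xFⁿ)(j₁,j₂) − (δ_yGⁿ)(j₁,j₂) = 0. -/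
/-!
Write `x̄` for the average of time levels `n` and `n + 1`. The scheme is the midpoint rule in time,
so each time difference of a square factors as `(x' ^ 2 - x ^ 2) / τ = (x' + x) * ((x' - x) / τ)`.
Substituting the three scheme equations, the coupling terms `b(·) R̄ V̄` cancel, and what remains,
`V̄ (δ_x² Ū + δ_y² Ū) + δ_x Ū δ_x V̄ + δ_y Ū δ_y V̄`, is the discrete divergence of the fluxes by the
discrete Leibniz rule.
-/

section Leibniz

variable (h : ℝ) (W Z : ℤ × ℤ → ℝ) (j : ℤ × ℤ)

theorem dx_mul_dx_shift :
    dx h (fun k => dx h W (k.1 - 1, k.2) * Z k) j = dxx h W j * Z j + dx h W j * dx h Z j := by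
  simp only [dx, dxx, sub_add_cancel, add_sub_cancel_right]
  ring

theorem dy_mul_dy_shift :
    dy h (fun k => dy h W (k.1, k.2 - 1) * Z k) j = dyy h W j * Z j + dy h W j * dy h Z j := by
  simp only [dy, dyy, sub_add_cancel, add_sub_cancel_right]
  ring

end Leibniz

section TimeDifference

variable {τ : ℝ} (h : ℝ) {U U' Z : ℤ × ℤ → ℝ}

theorem dx_sq_sub_dx_sq_div (hZ : ∀ k, (U' k - U k) / τ = Z k) (j : ℤ × ℤ) :
    (dx h U' j ^ 2 - dx h U j ^ 2) / τ = 2 * dx h (fun k => (U' k + U k) / 2) j * dx h Z j := by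
  simp only [dx, ← hZ]
  ring

theorem dy_sq_sub_dy_sq_div (hZ : ∀ k, (U' k - U k) / τ = Z k) (j : ℤ × ℤ) :
    (dy h U' j ^ 2 - dy h U j ^ 2) / τ = 2 * dy h (fun k => (U' k + U k) / 2) j * dy h Z j := by
  simp only [dy, ← hZ]
  ring

end TimeDifference

theorem LI_LEP_discrete_local_energy_conservation_general
    (τ h₁ h₂ : ℝ)
    (U V R : ℕ → ℤ × ℤ → ℝ)
    (n : ℕ)
    (scheme1 : ∀ j : ℤ × ℤ,
      (U (n+1) j - U n j) / τ = (V (n+1) j + V n j) / 2)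
    (scheme2 : ∀ j : ℤ × ℤ,
      (V (n+1) j - V n j) / τ =
        dxx h₁ (fun k => (U (n+1) k + U n k) / 2) j
        + dyy h₂ (fun k => (U (n+1) k + U n k) / 2) j
        - b ((3 * U n j - U (n-1) j) / 2) * (R (n+1) j + R n j) / 2)
    (scheme3 : ∀ j : ℤ × ℤ,
      (R (n+1) j - R n j) / τ =
        (1/2) * b ((3 * U n j - U (n-1) j) / 2) * (V (n+1) j + V n j) / 2)
    (D : ℕ → ℤ × ℤ → ℝ)
    (hD : ∀ (m : ℕ) (j : ℤ × ℤ), D m j =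
      (1/2) * (V m j)^2 + (1/2) * (dx h₁ (U m) j)^2
        + (1/2) * (dy h₂ (U m) j)^2 + (R m j)^2)
    (F G : ℤ × ℤ → ℝ)
    (hF : ∀ j : ℤ × ℤ, F j =
      dx h₁ (fun k => (U (n+1) k + U n k) / 2) (j.1 - 1, j.2)
        * ((V (n+1) j + V n j) / 2))
    (hG : ∀ j : ℤ × ℤ, G j =
      dy h₂ (fun k => (U (n+1) k + U n k) / 2) (j.1, j.2 - 1)
        * ((V (n+1) j + V n j) / 2)) :
    ∀ j : ℤ × ℤ,
      (D (n+1) j - D n j) / τ - dx h₁ F j - dy h₂ G j = 0 := by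
  intro j
  rw [funext hF, funext hG, dx_mul_dx_shift, dy_mul_dy_shift, hD, hD]
  linear_combination (1 / 2) * dx_sq_sub_dx_sq_div h₁ scheme1 j
    + (1 / 2) * dy_sq_sub_dy_sq_div h₂ scheme1 j
    + (V (n+1) j + V n j) / 2 * scheme2 j + (R (n+1) j + R n j) * scheme3 j

theorem LI_LEP_discrete_local_energy_conservation
    (τ h₁ h₂ : ℝ) (hτ : 0 < τ) (hh₁ : 0 < h₁) (hh₂ : 0 < h₂)
    (U V R : ℕ → ℤ × ℤ → ℝ)
    (n : ℕ) (hn : 1 ≤ n)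
    (scheme1 : ∀ j : ℤ × ℤ,
      (U (n+1) j - U n j) / τ = (V (n+1) j + V n j) / 2)
    (scheme2 : ∀ j : ℤ × ℤ,
      (V (n+1) j - V n j) / τ =
        dxx h₁ (fun k => (U (n+1) k + U n k) / 2) j
        + dyy h₂ (fun k => (U (n+1) k + U n k) / 2) j
        - b ((3 * U n j - U (n-1) j) / 2) * (R (n+1) j + R n j) / 2)
    (scheme3 : ∀ j : ℤ × ℤ,
      (R (n+1) j - R n j) / τ =
        (1/2) * b ((3 * U n j - U (n-1) j) / 2) * (V (n+1) j + V n j) / 2)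
    (D : ℕ → ℤ × ℤ → ℝ)
    (hD : ∀ (m : ℕ) (j : ℤ × ℤ), D m j =
      (1/2) * (V m j)^2 + (1/2) * (dx h₁ (U m) j)^2
        + (1/2) * (dy h₂ (U m) j)^2 + (R m j)^2)
    (F G : ℤ × ℤ → ℝ)
    (hF : ∀ j : ℤ × ℤ, F j =
      dx h₁ (fun k => (U (n+1) k + U n k) / 2) (j.1 - 1, j.2)
        * ((V (n+1) j + V n j) / 2))
    (hG : ∀ j : ℤ × ℤ, G j =
      dy h₂ (fun k => (U (n+1) k + U n k) / 2) (j.1, j.2 - 1)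
        * ((V (n+1) j + V n j) / 2)) :
    ∀ j : ℤ × ℤ,
      (D (n+1) j - D n j) / τ - dx h₁ F j - dy h₂ G j = 0 :=
  LI_LEP_discrete_local_energy_conservation_general τ h₁ h₂ U V R n scheme1 scheme2 scheme3 D hD F G
    hF hG
end

section
/- Let τ, h₁, h₂ > 0, let N₁, N₂ be positive integers, and let Uⁿ, Vⁿ, Rⁿ : ℤ × ℤ → ℝ (n ∈ ℕ) be sequences of (N₁,N₂)-periodic grid functions. Fix n ≥ 1 and suppose that for all (j₁,j₂) ∈ ℤ² the LI-LEP scheme equations hold: (Uⁿ⁺¹(j₁,j₂) − Uⁿ(j₁,j₂))/τ = (Vⁿ⁺¹(j₁,j₂) + Vⁿ(j₁,j₂))/2; (Vⁿ⁺¹(j₁,j₂) − Vⁿ(j₁,j₂))/τ = (δ_x²((Uⁿ⁺¹+Uⁿ)/2))(j₁,j₂) + (δ_y²((Uⁿ⁺¹+Uⁿ)/2))(j₁,j₂) − b((3Uⁿ(j₁,j₂) − Uⁿ⁻¹(j₁,j₂))/2)·(Rⁿ⁺¹(j₁,j₂) + Rⁿ(j₁,j₂))/2; (Rⁿ⁺¹(j₁,j₂)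 − Rⁿ(j₁,j₂))/τ = (1/2)·b((3Uⁿ(j₁,j₂) − Uⁿ⁻¹(j₁,j₂))/2)·(Vⁿ⁺¹(j₁,j₂) + Vⁿ(j₁,j₂))/2. Define the discrete global energy 𝓔ⁿ = h₁h₂ Σ_{j₁=0}^{N₁−1} Σ_{j₂=0}^{N₂−1} [ (1/2)Vⁿ(j₁,j₂)² + (1/2)((δ_xUⁿ)(j₁,j₂))² + (1/2)((δ_yUⁿ)(j₁,j₂))² + Rⁿ(j₁,j₂)² ]. Then 𝓔ⁿ⁺¹ = 𝓔ⁿ. -/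
lemma shift_sum (N : ℕ) (H : ℤ → ℝ) (hp : ∀ j : ℤ, H (j + N) = H j) :
    ∑ j ∈ Finset.range N, H ((j : ℤ) - 1) = ∑ j ∈ Finset.range N, H (j : ℤ) := by
  have h1 := Finset.sum_range_succ' (fun i : ℕ => H ((i : ℤ) - 1)) N
  have h2 := Finset.sum_range_succ (fun i : ℕ => H ((i : ℤ) - 1)) N
  have h3 : ∀ i : ℕ, H ((((i+1) : ℕ) : ℤ) - 1) = H (i : ℤ) := by
    intro i; congr 1; push_cast; ring
  have h4 : H ((N : ℤ) - 1) = H (((0:ℕ) : ℤ) - 1) := by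
    have h := hp (-1)
    rw [show (-1 : ℤ) + N = (N:ℤ) - 1 by ring] at h
    rw [h]; norm_num
  simp only [h3] at h1
  rw [h4] at h2
  linarith

lemma sum_shift_x (N₁ N₂ : ℕ) (G : ℤ → ℤ → ℝ)
    (hp : ∀ a c : ℤ, G (a + N₁) c = G a c) :
    ∑ j₁ ∈ Finset.range N₁, ∑ j₂ ∈ Finset.range N₂,
      (G (j₁:ℤ) (j₂:ℤ) - G ((j₁:ℤ) - 1) (j₂:ℤ)) = 0 := by
  rw [Finset.sum_comm]
  apply Finset.sum_eq_zero
  intro j₂ _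
  rw [Finset.sum_sub_distrib, shift_sum N₁ (fun a => G a (j₂:ℤ)) (fun a => hp a _)]
  ring

lemma sum_shift_y (N₁ N₂ : ℕ) (G : ℤ → ℤ → ℝ)
    (hp : ∀ a c : ℤ, G a (c + N₂) = G a c) :
    ∑ j₁ ∈ Finset.range N₁, ∑ j₂ ∈ Finset.range N₂,
      (G (j₁:ℤ) (j₂:ℤ) - G (j₁:ℤ) ((j₂:ℤ) - 1)) = 0 := by
  apply Finset.sum_eq_zero
  intro j₁ _
  rw [Finset.sum_sub_distrib, shift_sum N₂ (fun c => G (j₁:ℤ) c) (fun c => hp _ c)]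
  ring
/-- Auxiliary flux in the x-direction. -/
noncomputable def GX (h₁ : ℝ) (P Q : ℤ × ℤ → ℝ) (a c : ℤ) : ℝ :=
  (P (a+1, c) - Q (a+1, c)) * ((P (a+1, c) + Q (a+1, c)) - (P (a, c) + Q (a, c))) / (2 * h₁^2)

/-- Auxiliary flux in the y-direction. -/
noncomputable def GY (h₂ : ℝ) (P Q : ℤ × ℤ → ℝ) (a c : ℤ) : ℝ :=
  (P (a, c+1) - Q (a, c+1)) * ((P (a, c+1) + Q (a, c+1)) - (P (a, c) + Q (a, c))) / (2 * h₂^2)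

theorem LI_LEP_discrete_global_energy_conservation
    (τ h₁ h₂ : ℝ) (hτ : 0 < τ) (hh₁ : 0 < h₁) (hh₂ : 0 < h₂)
    (N₁ N₂ : ℕ) (hN₁ : 0 < N₁) (hN₂ : 0 < N₂)
    (U V R : ℕ → ℤ × ℤ → ℝ)
    (hUper : ∀ m : ℕ, GridPeriodic N₁ N₂ (U m))
    (hVper : ∀ m : ℕ, GridPeriodic N₁ N₂ (V m))
    (hRper : ∀ m : ℕ, GridPeriodic N₁ N₂ (R m))
    (n : ℕ) (hn : 1 ≤ n)
    (scheme1 : ∀ j : ℤ × ℤ,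
      (U (n+1) j - U n j) / τ = (V (n+1) j + V n j) / 2)
    (scheme2 : ∀ j : ℤ × ℤ,
      (V (n+1) j - V n j) / τ =
        dxx h₁ (fun k => (U (n+1) k + U n k) / 2) j
        + dyy h₂ (fun k => (U (n+1) k + U n k) / 2) j
        - b ((3 * U n j - U (n-1) j) / 2) * (R (n+1) j + R n j) / 2)
    (scheme3 : ∀ j : ℤ × ℤ,
      (R (n+1) j - R n j) / τ =
        (1/2) * b ((3 * U n j - U (n-1) j) / 2) * (V (n+1) j + V n j) / 2)
    (E : ℕ → ℝ)
    (hE : ∀ m : ℕ, E m = h₁ * h₂ *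
      ∑ j₁ ∈ Finset.range N₁, ∑ j₂ ∈ Finset.range N₂,
        ((1/2) * (V m ((j₁ : ℤ), (j₂ : ℤ)))^2
          + (1/2) * (dx h₁ (U m) ((j₁ : ℤ), (j₂ : ℤ)))^2
          + (1/2) * (dy h₂ (U m) ((j₁ : ℤ), (j₂ : ℤ)))^2
          + (R m ((j₁ : ℤ), (j₂ : ℤ)))^2)) :
    E (n+1) = E n := by

  have hτ' : τ ≠ 0 := ne_of_gt hτ
  have key : ∀ j₁ j₂ : ℤ,
      (1/2) * (V (n+1) (j₁, j₂))^2
        + (1/2) * (dx h₁ (U (n+1)) (j₁, j₂))^2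
        + (1/2) * (dy h₂ (U (n+1)) (j₁, j₂))^2
        + (R (n+1) (j₁, j₂))^2
      = ((1/2) * (V n (j₁, j₂))^2
          + (1/2) * (dx h₁ (U n) (j₁, j₂))^2
          + (1/2) * (dy h₂ (U n) (j₁, j₂))^2
          + (R n (j₁, j₂))^2)
        + (GX h₁ (U (n+1)) (U n) j₁ j₂ - GX h₁ (U (n+1)) (U n) (j₁ - 1) j₂)
        + (GY h₂ (U (n+1)) (U n) j₁ j₂ - GY h₂ (U (n+1)) (U n) j₁ (j₂ - 1)) := by
    intro j₁ j₂
    have a1 := scheme1 (j₁, j₂); rw [div_eq_iff hτ'] at a1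
    have a2 := scheme2 (j₁, j₂); rw [div_eq_iff hτ'] at a2
    have a3 := scheme3 (j₁, j₂); rw [div_eq_iff hτ'] at a3
    set X := dxx h₁ (fun k => (U (n+1) k + U n k) / 2) (j₁, j₂) with hX
    set Y := dyy h₂ (fun k => (U (n+1) k + U n k) / 2) (j₁, j₂) with hY
    have hv : (1/2) * (V (n+1) (j₁, j₂))^2 - (1/2) * (V n (j₁, j₂))^2
        = (U (n+1) (j₁, j₂) - U n (j₁, j₂)) * (X + Y)
          - τ * b ((3 * U n (j₁, j₂) - U (n-1) (j₁, j₂)) / 2)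
            * (R (n+1) (j₁, j₂) + R n (j₁, j₂)) * (V (n+1) (j₁, j₂) + V n (j₁, j₂)) / 4 := by
      linear_combination ((V (n+1) (j₁, j₂) + V n (j₁, j₂)) / 2) * a2 - (X + Y) * a1
    have hr : (R (n+1) (j₁, j₂))^2 - (R n (j₁, j₂))^2
        = τ * b ((3 * U n (j₁, j₂) - U (n-1) (j₁, j₂)) / 2)
            * (R (n+1) (j₁, j₂) + R n (j₁, j₂)) * (V (n+1) (j₁, j₂) + V n (j₁, j₂)) / 4 := by
      linear_combination (R (n+1) (j₁, j₂) + R n (j₁, j₂)) * a3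
    have hx : (U (n+1) (j₁, j₂) - U n (j₁, j₂)) * X
          + (1/2) * (dx h₁ (U (n+1)) (j₁, j₂))^2 - (1/2) * (dx h₁ (U n) (j₁, j₂))^2
        = GX h₁ (U (n+1)) (U n) j₁ j₂ - GX h₁ (U (n+1)) (U n) (j₁ - 1) j₂ := by
      have e1 : j₁ - 1 + 1 = j₁ := by ring
      simp only [hX, dxx, dx, GX, e1]
      ring
    have hy : (U (n+1) (j₁, j₂) - U n (j₁, j₂)) * Y
          + (1/2) * (dy h₂ (U (n+1)) (j₁, j₂))^2 - (1/2) * (dy h₂ (U n) (j₁, j₂))^2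
        = GY h₂ (U (n+1)) (U n) j₁ j₂ - GY h₂ (U (n+1)) (U n) j₁ (j₂ - 1) := by
      have e2 : j₂ - 1 + 1 = j₂ := by ring
      simp only [hY, dyy, dy, GY, e2]
      ring
    linear_combination hv + hr + hx + hy
  have pU1 : ∀ a c : ℤ, U (n+1) (a + N₁, c) = U (n+1) (a, c) := fun a c => (hUper (n+1) a c).1
  have pU1' : ∀ a c : ℤ, U n (a + N₁, c) = U n (a, c) := fun a c => (hUper n a c).1
  have pU2 : ∀ a c : ℤ, U (n+1) (a, c + N₂) = U (n+1) (a, c) := fun a c => (hUper (n+1) a c).2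
  have pU2' : ∀ a c : ℤ, U n (a, c + N₂) = U n (a, c) := fun a c => (hUper n a c).2
  have hGxper : ∀ a c : ℤ, GX h₁ (U (n+1)) (U n) (a + N₁) c = GX h₁ (U (n+1)) (U n) a c := by
    intro a c
    have h1 : (a + (N₁:ℤ)) + 1 = (a + 1) + N₁ := by ring
    simp only [GX, h1, pU1, pU1']
  have hGyper : ∀ a c : ℤ, GY h₂ (U (n+1)) (U n) a (c + N₂) = GY h₂ (U (n+1)) (U n) a c := by
    intro a c
    have h1 : (c + (N₂:ℤ)) + 1 = (c + 1) + N₂ := by ring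
    simp only [GY, h1, pU2, pU2']
  have hGx0 := sum_shift_x N₁ N₂ (GX h₁ (U (n+1)) (U n)) hGxper
  have hGy0 := sum_shift_y N₁ N₂ (GY h₂ (U (n+1)) (U n)) hGyper
  rw [hE (n+1), hE n]
  congr 1
  calc ∑ j₁ ∈ Finset.range N₁, ∑ j₂ ∈ Finset.range N₂,
        ((1/2) * (V (n+1) ((j₁:ℤ), (j₂:ℤ)))^2
          + (1/2) * (dx h₁ (U (n+1)) ((j₁:ℤ), (j₂:ℤ)))^2
          + (1/2) * (dy h₂ (U (n+1)) ((j₁:ℤ), (j₂:ℤ)))^2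
          + (R (n+1) ((j₁:ℤ), (j₂:ℤ)))^2)
      = ∑ j₁ ∈ Finset.range N₁, ∑ j₂ ∈ Finset.range N₂,
        (((1/2) * (V n ((j₁:ℤ), (j₂:ℤ)))^2
          + (1/2) * (dx h₁ (U n) ((j₁:ℤ), (j₂:ℤ)))^2
          + (1/2) * (dy h₂ (U n) ((j₁:ℤ), (j₂:ℤ)))^2
          + (R n ((j₁:ℤ), (j₂:ℤ)))^2)
        + (GX h₁ (U (n+1)) (U n) (j₁:ℤ) (j₂:ℤ) - GX h₁ (U (n+1)) (U n) ((j₁:ℤ) - 1) (j₂:ℤ))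
        + (GY h₂ (U (n+1)) (U n) (j₁:ℤ) (j₂:ℤ) - GY h₂ (U (n+1)) (U n) (j₁:ℤ) ((j₂:ℤ) - 1))) := by
        refine Finset.sum_congr rfl fun j₁ _ => Finset.sum_congr rfl fun j₂ _ => ?_
        exact key _ _
    _ = _ := by
        simp only [Finset.sum_add_distrib]
        rw [hGx0, hGy0]
        ring
end

section
/- Let τ, h₁, h₂ > 0, let N₁, N₂ be positive integers, and let Uⁿ, Vⁿ, Rⁿ and W be (N₁,N₂)-periodic grid functions ℤ × ℤ → ℝ. Then there exists a unique triple (Uⁿ⁺¹, Vⁿ⁺¹, Rⁿ⁺¹) of (N₁,N₂)-periodic grid functions satisfying, for all (j₁,j₂) ∈ ℤ²: (Uⁿ⁺¹(j₁,j₂) − Uⁿ(j₁,j₂))/τ = (Vⁿ⁺¹(j₁,j₂) + Vⁿ(j₁,j₂))/2; (Vⁿ⁺¹(j₁,j₂) − Vⁿ(j₁,j₂))/τ = (δ_x²((Uⁿ⁺¹+Uⁿ)/2))(j₁,j₂) + (δ_y²((Uⁿ⁺¹+Uⁿ)/2))(j₁,j₂) − b(W(j₁,j₂))·(Rⁿ⁺¹(j₁,j₂)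 + Rⁿ(j₁,j₂))/2; (Rⁿ⁺¹(j₁,j₂) − Rⁿ(j₁,j₂))/τ = (1/2)·b(W(j₁,j₂))·(Vⁿ⁺¹(j₁,j₂) + Vⁿ(j₁,j₂))/2. -/
lemma sum_mul_second_difference {G : Type*} [AddCommGroup G] [Fintype G] (x : G → ℝ) (e : G) :
    ∑ k, x k * (x (k + e) - 2 * x k + x (k - e)) = -∑ k, (x (k + e) - x k) ^ 2 := by
  have hsq : ∑ k, x (k + e) ^ 2 = ∑ k, x k ^ 2 :=
    Equiv.sum_comp (Equiv.addRight e) (fun k => x k ^ 2)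
  have hcross : ∑ k, x (k + e) * x k = ∑ k, x k * x (k - e) := by
    simpa using Equiv.sum_comp (Equiv.addRight e) (fun k => x k * x (k - e))
  have expand : ∀ k, x k * (x (k + e) - 2 * x k + x (k - e)) + (x (k + e) - x k) ^ 2 =
      x (k + e) ^ 2 - x k ^ 2 + (x k * x (k - e) - x (k + e) * x k) := fun k => by ring
  rw [eq_neg_iff_add_eq_zero, ← Finset.sum_add_distrib, Finset.sum_congr rfl fun k _ => expand k,
    Finset.sum_add_distrib, Finset.sum_sub_distrib, Finset.sum_sub_distrib, hsq, hcross]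
  ring

section Torus

variable {N₁ N₂ : ℕ}

def torusProj (N₁ N₂ : ℕ) : ℤ × ℤ → ZMod N₁ × ZMod N₂ := Prod.map (↑) (↑)

lemma torusProj_surjective : Function.Surjective (torusProj N₁ N₂) :=
  Prod.map_surjective.2 ⟨ZMod.intCast_surjective, ZMod.intCast_surjective⟩

lemma gridPeriodic_comp_torusProj (u : ZMod N₁ × ZMod N₂ → ℝ) :
    GridPeriodic N₁ N₂ (u ∘ torusProj N₁ N₂) := fun j₁ j₂ => by simp [torusProj]

lemma GridPeriodic.apply_eq_of_torusProj_eq {X : ℤ × ℤ → ℝ} (hX : GridPeriodic N₁ N₂ X)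
    {i j : ℤ × ℤ} (h : torusProj N₁ N₂ i = torusProj N₁ N₂ j) : X i = X j := by
  obtain ⟨k₁, hk₁⟩ := (ZMod.intCast_eq_intCast_iff_dvd_sub _ _ _).1 (Prod.ext_iff.1 h).1
  obtain ⟨k₂, hk₂⟩ := (ZMod.intCast_eq_intCast_iff_dvd_sub _ _ _).1 (Prod.ext_iff.1 h).2
  have hper₁ : ∀ j₂, Function.Periodic (fun j₁ => X (j₁, j₂)) N₁ := fun j₂ j₁ => (hX j₁ j₂).1
  have hper₂ : ∀ j₁, Function.Periodic (fun j₂ => X (j₁, j₂)) N₂ := fun j₁ j₂ => (hX j₁ j₂).2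
  calc X i = X (i.1, i.2 + k₂ * N₂) := ((hper₂ i.1).int_mul k₂ i.2).symm
    _ = X (i.1 + k₁ * N₁, i.2 + k₂ * N₂) := ((hper₁ _).int_mul k₁ i.1).symm
    _ = X j := by congr 1; ext <;> simp only <;> linarith

lemma GridPeriodic.exists_comp_torusProj {X : ℤ × ℤ → ℝ} (hX : GridPeriodic N₁ N₂ X) :
    ∃ u : ZMod N₁ × ZMod N₂ → ℝ, X = u ∘ torusProj N₁ N₂ :=
  ⟨X ∘ Function.surjInv torusProj_surjective, funext fun _ =>
    (hX.apply_eq_of_torusProj_eq (Function.surjInv_eq _ _)).symm⟩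

noncomputable def torusLaplacian (h₁ h₂ : ℝ) (u : ZMod N₁ × ZMod N₂ → ℝ)
    (k : ZMod N₁ × ZMod N₂) : ℝ :=
  (u (k + (1, 0)) - 2 * u k + u (k - (1, 0))) / h₁ ^ 2 +
    (u (k + (0, 1)) - 2 * u k + u (k - (0, 1))) / h₂ ^ 2

lemma dxx_add_dyy_comp_torusProj (h₁ h₂ : ℝ) (u : ZMod N₁ × ZMod N₂ → ℝ) (j : ℤ × ℤ) :
    dxx h₁ (u ∘ torusProj N₁ N₂) j + dyy h₂ (u ∘ torusProj N₁ N₂) j =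
      torusLaplacian h₁ h₂ u (torusProj N₁ N₂ j) := by
  obtain ⟨j₁, j₂⟩ := j
  simp [dxx, dyy, torusLaplacian, torusProj, sub_eq_add_neg]

lemma GridPeriodic.dxx_add_dyy {X : ℤ × ℤ → ℝ} (hX : GridPeriodic N₁ N₂ X) (h₁ h₂ : ℝ) :
    GridPeriodic N₁ N₂ (fun j => dxx h₁ X j + dyy h₂ X j) := by
  obtain ⟨u, rfl⟩ := hX.exists_comp_torusProj
  simp_rw [dxx_add_dyy_comp_torusProj]
  exact gridPeriodic_comp_torusProj (torusLaplacian h₁ h₂ u)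

variable [NeZero N₁] [NeZero N₂]

lemma sum_mul_torusLaplacian_nonpos (h₁ h₂ : ℝ) (u : ZMod N₁ × ZMod N₂ → ℝ) :
    ∑ k, u k * torusLaplacian h₁ h₂ u k ≤ 0 := by
  have hsplit : ∑ k, u k * torusLaplacian h₁ h₂ u k =
      (∑ k, u k * (u (k + (1, 0)) - 2 * u k + u (k - (1, 0)))) / h₁ ^ 2 +
        (∑ k, u k * (u (k + (0, 1)) - 2 * u k + u (k - (0, 1)))) / h₂ ^ 2 := by
    rw [Finset.sum_div, Finset.sum_div, ← Finset.sum_add_distrib]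
    exact Finset.sum_congr rfl fun k _ => by rw [torusLaplacian]; ring
  rw [hsplit, sum_mul_second_difference, sum_mul_second_difference]
  have hsq : ∀ e : ZMod N₁ × ZMod N₂, 0 ≤ ∑ k, (u (k + e) - u k) ^ 2 :=
    fun e => Finset.sum_nonneg fun k _ => sq_nonneg _
  have := div_nonneg (hsq (1, 0)) (sq_nonneg h₁)
  have := div_nonneg (hsq (0, 1)) (sq_nonneg h₂)
  rw [neg_div, neg_div]
  linarith

noncomputable def torusHelmholtz (h₁ h₂ : ℝ) (c : ZMod N₁ × ZMod N₂ → ℝ) :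
    (ZMod N₁ × ZMod N₂ → ℝ) →ₗ[ℝ] (ZMod N₁ × ZMod N₂ → ℝ) where
  toFun u k := c k * u k - torusLaplacian h₁ h₂ u k / 2
  map_add' u v := by funext k; simp only [torusLaplacian, Pi.add_apply]; ring
  map_smul' a u := by
    funext k; simp only [torusLaplacian, Pi.smul_apply, smul_eq_mul, RingHom.id_apply]; ring

lemma torusHelmholtz_injective (h₁ h₂ : ℝ) {c : ZMod N₁ × ZMod N₂ → ℝ} (hc : ∀ k, 0 < c k) :
    Function.Injective (torusHelmholtz h₁ h₂ c) := by
  rw [← LinearMap.ker_eq_bot, LinearMap.ker_eq_bot']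
  intro u hu
  have henergy : ∑ k, c k * u k ^ 2 ≤ 0 := by
    have hzero : ∑ k, u k * torusHelmholtz h₁ h₂ c u k = 0 := by simp [hu]
    have hexpand : ∑ k, u k * torusHelmholtz h₁ h₂ c u k =
        ∑ k, c k * u k ^ 2 - (∑ k, u k * torusLaplacian h₁ h₂ u k) / 2 := by
      rw [Finset.sum_div, ← Finset.sum_sub_distrib]
      refine Finset.sum_congr rfl fun k _ => ?_
      simp only [torusHelmholtz, LinearMap.coe_mk, AddHom.coe_mk]
      ring
    linarith [sum_mul_torusLaplacian_nonpos h₁ h₂ u]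
  have hterm : ∀ k, 0 ≤ c k * u k ^ 2 := fun k => mul_nonneg (hc k).le (sq_nonneg _)
  funext k
  have hk := (Finset.sum_eq_zero_iff_of_nonneg fun k _ => hterm k).1
    (henergy.antisymm (Finset.sum_nonneg fun k _ => hterm k)) k (Finset.mem_univ k)
  simpa [(hc k).ne'] using hk

lemma torusHelmholtz_bijective (h₁ h₂ : ℝ) {c : ZMod N₁ × ZMod N₂ → ℝ} (hc : ∀ k, 0 < c k) :
    Function.Bijective (torusHelmholtz h₁ h₂ c) :=
  ⟨torusHelmholtz_injective h₁ h₂ hc,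
    LinearMap.injective_iff_surjective.1 (torusHelmholtz_injective h₁ h₂ hc)⟩

end Torus

theorem existsUnique_gridPeriodic_helmholtz {N₁ N₂ : ℕ} (hN₁ : 0 < N₁) (hN₂ : 0 < N₂)
    (h₁ h₂ : ℝ) {c f : ℤ × ℤ → ℝ} (hc : GridPeriodic N₁ N₂ c) (hc_pos : ∀ j, 0 < c j)
    (hf : GridPeriodic N₁ N₂ f) :
    ∃! U : ℤ × ℤ → ℝ, GridPeriodic N₁ N₂ U ∧
      ∀ j, c j * U j - (dxx h₁ U j + dyy h₂ U j) / 2 = f j := by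
  have : NeZero N₁ := ⟨hN₁.ne'⟩
  have : NeZero N₂ := ⟨hN₂.ne'⟩
  obtain ⟨c', rfl⟩ := hc.exists_comp_torusProj
  obtain ⟨f', rfl⟩ := hf.exists_comp_torusProj
  have hc'_pos : ∀ k, 0 < c' k := torusProj_surjective.forall.2 hc_pos
  have hsolves : ∀ u, (∀ j, (c' ∘ torusProj N₁ N₂) j * (u ∘ torusProj N₁ N₂) j -
      (dxx h₁ (u ∘ torusProj N₁ N₂) j + dyy h₂ (u ∘ torusProj N₁ N₂) j) / 2 =
        (f' ∘ torusProj N₁ N₂) j) ↔ torusHelmholtz h₁ h₂ c' u = f' := by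
    intro u
    simp only [funext_iff, torusProj_surjective.forall, dxx_add_dyy_comp_torusProj,
      Function.comp_apply, torusHelmholtz, LinearMap.coe_mk, AddHom.coe_mk]
  have hbij := torusHelmholtz_bijective h₁ h₂ hc'_pos
  obtain ⟨u, hu⟩ := hbij.2 f'
  refine ⟨u ∘ torusProj N₁ N₂, ⟨gridPeriodic_comp_torusProj u, (hsolves u).2 hu⟩, ?_⟩
  rintro U ⟨hU, hU_eq⟩
  obtain ⟨u', rfl⟩ := hU.exists_comp_torusProj
  rw [hbij.1 (((hsolves u').1 hU_eq).trans hu.symm)]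

section Scheme

variable (τ h₁ h₂ : ℝ) (Un Vn Rn W : ℤ × ℤ → ℝ)

noncomputable def reducedCoeff (j : ℤ × ℤ) : ℝ := 2 / τ ^ 2 + b (W j) ^ 2 / 4

noncomputable def reducedSource (j : ℤ × ℤ) : ℝ :=
  reducedCoeff τ W j * Un j + (dxx h₁ Un j + dyy h₂ Un j) / 2 + 2 * Vn j / τ - b (W j) * Rn j

variable {τ h₁ h₂ Un Vn Rn W}

lemma reducedCoeff_pos (hτ : τ ≠ 0) (j : ℤ × ℤ) : 0 < reducedCoeff τ W j := by
  unfold reducedCoeff; positivity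

lemma scheme_iff_reduced (hτ : τ ≠ 0) {U V R : ℤ × ℤ → ℝ} :
    ((∀ j, (U j - Un j) / τ = (V j + Vn j) / 2) ∧
      (∀ j, (V j - Vn j) / τ =
        dxx h₁ (fun k => (U k + Un k) / 2) j + dyy h₂ (fun k => (U k + Un k) / 2) j
          - b (W j) * (R j + Rn j) / 2) ∧
      (∀ j, (R j - Rn j) / τ = (1/2) * b (W j) * (V j + Vn j) / 2)) ↔
    (V = fun j => 2 * (U j - Un j) / τ - Vn j) ∧ (R = fun j => Rn j + b (W j) / 2 * (U j - Un j)) ∧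
      ∀ j, reducedCoeff τ W j * U j - (dxx h₁ U j + dyy h₂ U j) / 2 =
        reducedSource τ h₁ h₂ Un Vn Rn W j := by
  have hττ : τ * τ⁻¹ = 1 := mul_inv_cancel₀ hτ
  simp only [funext_iff, reducedSource, reducedCoeff, dxx, dyy]
  constructor
  · rintro ⟨hU, hV, hR⟩
    have hV' : ∀ j, V j = 2 * (U j - Un j) / τ - Vn j := fun j => by
      linear_combination -2 * hU j
    have hR' : ∀ j, R j = Rn j + b (W j) / 2 * (U j - Un j) := fun j => by
      linear_combination τ * hR j - (b (W j) * τ / 2) * hU j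
        - (R j - Rn j - b (W j) / 2 * (U j - Un j)) * hττ
    -- destructuring `j` lets `linear_combination` identify `U j` with the unfolded `U (j.1, j.2)`
    refine ⟨hV', hR', fun ⟨j₁, j₂⟩ => ?_⟩
    have hVj := hV (j₁, j₂)
    rw [hV', hR'] at hVj
    linear_combination hVj
  · rintro ⟨hV, hR, hU⟩
    refine ⟨fun j => ?_, fun ⟨j₁, j₂⟩ => ?_, fun j => ?_⟩
    · rw [hV]; ring
    · rw [hV, hR]; linear_combination hU (j₁, j₂)
    · rw [hV, hR]; ring

end Scheme

theorem LI_LEP_unique_solvability_general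
    (τ h₁ h₂ : ℝ) (hτ : 0 < τ)
    (N₁ N₂ : ℕ) (hN₁ : 0 < N₁) (hN₂ : 0 < N₂)
    (Un Vn Rn W : ℤ × ℤ → ℝ)
    (hUn : GridPeriodic N₁ N₂ Un) (hVn : GridPeriodic N₁ N₂ Vn)
    (hRn : GridPeriodic N₁ N₂ Rn) (hW : GridPeriodic N₁ N₂ W) :
    ∃! UVR : (ℤ × ℤ → ℝ) × (ℤ × ℤ → ℝ) × (ℤ × ℤ → ℝ),
      GridPeriodic N₁ N₂ UVR.1 ∧ GridPeriodic N₁ N₂ UVR.2.1 ∧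
      GridPeriodic N₁ N₂ UVR.2.2 ∧
      (∀ j : ℤ × ℤ,
        (UVR.1 j - Un j) / τ = (UVR.2.1 j + Vn j) / 2) ∧
      (∀ j : ℤ × ℤ,
        (UVR.2.1 j - Vn j) / τ =
          dxx h₁ (fun k => (UVR.1 k + Un k) / 2) j
          + dyy h₂ (fun k => (UVR.1 k + Un k) / 2) j
          - b (W j) * (UVR.2.2 j + Rn j) / 2) ∧
      (∀ j : ℤ × ℤ,
        (UVR.2.2 j - Rn j) / τ =
          (1/2) * b (W j) * (UVR.2.1 j + Vn j) / 2) := by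
  have hΔUn := hUn.dxx_add_dyy h₁ h₂
  have hcoeff : GridPeriodic N₁ N₂ (reducedCoeff τ W) := fun j₁ j₂ => by
    simp [reducedCoeff, hW j₁ j₂]
  have hsource : GridPeriodic N₁ N₂ (reducedSource τ h₁ h₂ Un Vn Rn W) := fun j₁ j₂ => by
    simp only [reducedSource, hcoeff j₁ j₂, hΔUn j₁ j₂, hUn j₁ j₂, hVn j₁ j₂, hRn j₁ j₂, hW j₁ j₂,
      and_self]
  obtain ⟨U, ⟨hU, hU_eq⟩, hU_unique⟩ := existsUnique_gridPeriodic_helmholtz hN₁ hN₂ h₁ h₂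
    hcoeff (reducedCoeff_pos hτ.ne') hsource
  refine ⟨(U, fun j => 2 * (U j - Un j) / τ - Vn j, fun j => Rn j + b (W j) / 2 * (U j - Un j)),
    ⟨hU, fun j₁ j₂ => ?_, fun j₁ j₂ => ?_, (scheme_iff_reduced hτ.ne').2 ⟨rfl, rfl, hU_eq⟩⟩, ?_⟩
  · simp only [hU j₁ j₂, hUn j₁ j₂, hVn j₁ j₂, and_self]
  · simp only [hU j₁ j₂, hUn j₁ j₂, hRn j₁ j₂, hW j₁ j₂, and_self]
  rintro ⟨U', V', R'⟩ ⟨hU', -, -, hscheme⟩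
  dsimp only at hU' hscheme
  obtain ⟨rfl, rfl, hU'_eq⟩ := (scheme_iff_reduced hτ.ne').1 hscheme
  rw [hU_unique U' ⟨hU', hU'_eq⟩]

theorem LI_LEP_unique_solvability
    (τ h₁ h₂ : ℝ) (hτ : 0 < τ) (hh₁ : 0 < h₁) (hh₂ : 0 < h₂)
    (N₁ N₂ : ℕ) (hN₁ : 0 < N₁) (hN₂ : 0 < N₂)
    (Un Vn Rn W : ℤ × ℤ → ℝ)
    (hUn : GridPeriodic N₁ N₂ Un) (hVn : GridPeriodic N₁ N₂ Vn)
    (hRn : GridPeriodic N₁ N₂ Rn) (hW : GridPeriodic N₁ N₂ W) :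
    ∃! UVR : (ℤ × ℤ → ℝ) × (ℤ × ℤ → ℝ) × (ℤ × ℤ → ℝ),
      GridPeriodic N₁ N₂ UVR.1 ∧ GridPeriodic N₁ N₂ UVR.2.1 ∧
      GridPeriodic N₁ N₂ UVR.2.2 ∧
      (∀ j : ℤ × ℤ,
        (UVR.1 j - Un j) / τ = (UVR.2.1 j + Vn j) / 2) ∧
      (∀ j : ℤ × ℤ,
        (UVR.2.1 j - Vn j) / τ =
          dxx h₁ (fun k => (UVR.1 k + Un k) / 2) j
          + dyy h₂ (fun k => (UVR.1 k + Un k) / 2) j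
          - b (W j) * (UVR.2.2 j + Rn j) / 2) ∧
      (∀ j : ℤ × ℤ,
        (UVR.2.2 j - Rn j) / τ =
          (1/2) * b (W j) * (UVR.2.1 j + Vn j) / 2) :=
  LI_LEP_unique_solvability_general τ h₁ h₂ hτ N₁ N₂ hN₁ hN₂ Un Vn Rn W hUn hVn hRn hW
end

section
/- For all x, y ∈ ℝ, |b(x) − b(y)| ≤ (3/2)·|x − y|, where b(x) = sin(x)/√(2 − cos(x)); that is, b is Lipschitz continuous with Lipschitz constant 3/2. -/
/-!
With `s = √(2 - cos x) ∈ [1, √3]`, the quotient rule and `sin² x = 1 - cos² x` give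
`b' x = (3 - s⁴) / (2 s³)`, and `|3 - s⁴| ≤ 2 s³` on `[1, 2]`. So `b` is even `1`-Lipschitz.
-/

open Real

lemma one_le_sqrt_two_sub_cos (x : ℝ) : 1 ≤ √(2 - cos x) :=
  one_le_sqrt.mpr (by linarith [cos_le_one x])

lemma sqrt_two_sub_cos_le_two (x : ℝ) : √(2 - cos x) ≤ 2 :=
  sqrt_le_iff.mpr ⟨by norm_num, by linarith [neg_one_le_cos x]⟩

lemma abs_three_sub_pow_four_le {s : ℝ} (hs₁ : 1 ≤ s) (hs₂ : s ≤ 2) :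
    |3 - s ^ 4| ≤ 2 * s ^ 3 := by
  have hs₀ : 0 ≤ s := by linarith
  rw [abs_le]
  constructor
  · nlinarith [pow_nonneg hs₀ 3]
  · nlinarith [pow_le_pow_left₀ zero_le_one hs₁ 3, pow_le_pow_left₀ zero_le_one hs₁ 4]

lemma hasDerivAt_b (x : ℝ) :
    HasDerivAt b ((3 - √(2 - cos x) ^ 4) / (2 * √(2 - cos x) ^ 3)) x := by
  have hu : 0 < 2 - cos x := by linarith [cos_le_one x]
  have hs : 0 < √(2 - cos x) := sqrt_pos.mpr hu
  have hsqrt : HasDerivAt (fun y => √(2 - cos y)) (sin x / (2 * √(2 - cos x))) x := by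
    simpa using ((hasDerivAt_cos x).const_sub 2).sqrt hu.ne'
  refine ((hasDerivAt_sin x).div hsqrt hs.ne').congr_deriv ?_
  have hsq : √(2 - cos x) ^ 2 = 2 - cos x := sq_sqrt hu.le
  field_simp
  linear_combination (√(2 - cos x) ^ 2 + cos x + 2) * hsq - sin_sq_add_cos_sq x

lemma abs_deriv_b_le_one (x : ℝ) : |deriv b x| ≤ 1 := by
  have hs := one_le_sqrt_two_sub_cos x
  rw [(hasDerivAt_b x).deriv, abs_div, abs_of_pos (a := 2 * _) (by positivity),
    div_le_one (by positivity)]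
  exact abs_three_sub_pow_four_le hs (sqrt_two_sub_cos_le_two x)

lemma lipschitzWith_one_b : LipschitzWith 1 b :=
  lipschitzWith_of_nnnorm_deriv_le (fun x => (hasDerivAt_b x).differentiableAt) fun x => by
    simpa [← NNReal.coe_le_coe] using abs_deriv_b_le_one x

theorem b_lipschitz : ∀ x y : ℝ, |b x - b y| ≤ (3/2) * |x - y| := by
  intro x y
  calc |b x - b y| ≤ 1 * |x - y| := by
        simpa [dist_eq] using lipschitzWith_one_b.dist_le_mul x y
    _ ≤ (3/2) * |x - y| := by gcongr; norm_num
end
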